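/- arXiv:1806.08690 — 3 statements merged into one kernel-verified Lean document; each statement's English description precedes it below -/
import Mathlib

section
/- Let z ∈ ℝⁿ be nonzero, let Π_z be the orthogonal projection onto span(z), and let 1 ≤ 2k ≤ n. Then the RIP constant of the operator I − Π_z on the model Σ_{2k} equals σ_{2k}(z)²/‖z‖₂², i.e. δ_{Σ_{2k}}(I − Π_z) = sup_{x ∈ Σ_{2k}, x≠0} | ‖(I−Π_z)x‖₂²/‖x‖₂² − 1 | = σ_{2k}(z)²/‖z‖₂². -/
noncomputable section

open RealInnerProductSpace

/-- The set of `j`-sparse vectors in `ℝⁿ`. -/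
def sparse (n j : ℕ) : Set (EuclideanSpace ℝ (Fin n)) :=
  {x | ∃ S : Finset (Fin n), S.card ≤ j ∧ ∀ i ∉ S, x i = 0}

/-- `σ_j(u)²`: the sum of the `j` largest squared entries of `u`. -/
def sigmaSq (n j : ℕ) (u : EuclideanSpace ℝ (Fin n)) : ℝ :=
  sSup {v : ℝ | ∃ S : Finset (Fin n), S.card ≤ j ∧ v = ∑ i ∈ S, (u i) ^ 2}

/-- The orthogonal projection onto the line spanned by `z`. -/
def projLine {n : ℕ} (z x : EuclideanSpace ℝ (Fin n)) : EuclideanSpace ℝ (Fin n) :=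
  (⟪z, x⟫ / ‖z‖ ^ 2) • z

lemma my_inner_eq {n : ℕ} (z x : EuclideanSpace ℝ (Fin n)) : ⟪z, x⟫ = ∑ i, z i * x i := by
  simp [PiLp.inner_apply, RCLike.inner_apply, mul_comm]

lemma my_norm_sq {n : ℕ} (x : EuclideanSpace ℝ (Fin n)) : ‖x‖ ^ 2 = ∑ i, (x i) ^ 2 := by
  rw [PiLp.norm_sq_eq_of_L2]
  simp [Real.norm_eq_abs, sq_abs]

lemma ratio_eq {n : ℕ} (z x : EuclideanSpace ℝ (Fin n)) (hz : z ≠ 0) (hx : x ≠ 0) :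
    |‖x - projLine z x‖ ^ 2 / ‖x‖ ^ 2 - 1| = ⟪z, x⟫ ^ 2 / (‖z‖ ^ 2 * ‖x‖ ^ 2) := by
  have hz2 : (0:ℝ) < ‖z‖ ^ 2 := pow_pos (norm_pos_iff.mpr hz) 2
  have hx2 : (0:ℝ) < ‖x‖ ^ 2 := pow_pos (norm_pos_iff.mpr hx) 2
  have hz2' : (‖z‖:ℝ) ^ 2 ≠ 0 := ne_of_gt hz2
  have hx2' : (‖x‖:ℝ) ^ 2 ≠ 0 := ne_of_gt hx2
  have key : ‖x - projLine z x‖ ^ 2 = ‖x‖ ^ 2 - ⟪z, x⟫ ^ 2 / ‖z‖ ^ 2 := by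
    rw [projLine, norm_sub_sq_real, real_inner_smul_right, norm_smul, Real.norm_eq_abs,
      mul_pow, sq_abs, real_inner_comm x z]
    field_simp
    ring
  rw [key]
  have : (‖x‖ ^ 2 - ⟪z, x⟫ ^ 2 / ‖z‖ ^ 2) / ‖x‖ ^ 2 - 1 = -(⟪z, x⟫ ^ 2 / (‖z‖ ^ 2 * ‖x‖ ^ 2)) := by
    field_simp
    ring
  rw [this, abs_neg, abs_of_nonneg (by positivity)]

theorem stmt6 (n k : ℕ) (h1 : 1 ≤ 2 * k) (h2 : 2 * k ≤ n)
    (z : EuclideanSpace ℝ (Fin n)) (hz : z ≠ 0) :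
    sSup {v : ℝ | ∃ x ∈ sparse n (2 * k), x ≠ 0 ∧
        v = |‖x - projLine z x‖ ^ 2 / ‖x‖ ^ 2 - 1|} = sigmaSq n (2 * k) z / ‖z‖ ^ 2 := by
  have hz2 : (0:ℝ) < ‖z‖ ^ 2 := pow_pos (norm_pos_iff.mpr hz) 2
  set T : Set ℝ := {v : ℝ | ∃ S : Finset (Fin n), S.card ≤ 2 * k ∧ v = ∑ i ∈ S, (z i) ^ 2} with hT
  have hTim : T = (fun S : Finset (Fin n) => ∑ i ∈ S, (z i) ^ 2) '' {S | S.card ≤ 2 * k} := by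
    ext v
    constructor
    · rintro ⟨S, hS, rfl⟩; exact ⟨S, hS, rfl⟩
    · rintro ⟨S, hS, rfl⟩; exact ⟨S, hS, rfl⟩
  have hTfin : T.Finite := by
    rw [hTim]; exact (Set.toFinite _).image _
  have hTne : T.Nonempty := ⟨0, ∅, by simp⟩
  have hmem : sSup T ∈ T := hTne.csSup_mem hTfin
  obtain ⟨S₀, hS₀card, hS₀⟩ := hmem
  -- positivity of sSup T
  have hσpos : 0 < sSup T := by
    obtain ⟨i, hi⟩ : ∃ i, z i ≠ 0 := by
      by_contra h
      push_neg at h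
      exact hz (by ext i; simpa using h i)
    have hmem' : (z i) ^ 2 ∈ T := ⟨{i}, by simpa using h1, by simp⟩
    have := le_csSup hTfin.bddAbove hmem'
    have : (0:ℝ) < (z i) ^ 2 := by positivity
    linarith [le_csSup hTfin.bddAbove hmem']
  have hub : ∀ v ∈ {v : ℝ | ∃ x ∈ sparse n (2 * k), x ≠ 0 ∧
      v = |‖x - projLine z x‖ ^ 2 / ‖x‖ ^ 2 - 1|}, v ≤ sSup T / ‖z‖ ^ 2 := by
    rintro v ⟨x, ⟨S, hScard, hSsupp⟩, hx, rfl⟩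
    rw [ratio_eq z x hz hx]
    have hx2 : (0:ℝ) < ‖x‖ ^ 2 := pow_pos (norm_pos_iff.mpr hx) 2
    have hinner : ⟪z, x⟫ = ∑ i ∈ S, z i * x i := by
      rw [my_inner_eq]
      exact (Finset.sum_subset S.subset_univ (fun i _ hiS => by rw [hSsupp i hiS, mul_zero])).symm
    have hcs : ⟪z, x⟫ ^ 2 ≤ (∑ i ∈ S, (z i) ^ 2) * ∑ i ∈ S, (x i) ^ 2 := by
      rw [hinner]; exact Finset.sum_mul_sq_le_sq_mul_sq S _ _
    have hxS : ∑ i ∈ S, (x i) ^ 2 ≤ ‖x‖ ^ 2 := by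
      rw [my_norm_sq]
      exact Finset.sum_le_sum_of_subset_of_nonneg S.subset_univ (fun i _ _ => sq_nonneg _)
    have hzS : ∑ i ∈ S, (z i) ^ 2 ≤ sSup T := le_csSup hTfin.bddAbove ⟨S, hScard, rfl⟩
    have hzSnn : (0:ℝ) ≤ ∑ i ∈ S, (z i) ^ 2 := Finset.sum_nonneg fun i _ => sq_nonneg _
    rw [div_le_div_iff₀ (by positivity) hz2]
    calc ⟪z, x⟫ ^ 2 * ‖z‖ ^ 2 ≤ ((∑ i ∈ S, (z i) ^ 2) * ‖x‖ ^ 2) * ‖z‖ ^ 2 := by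
          apply mul_le_mul_of_nonneg_right _ (le_of_lt hz2)
          calc ⟪z, x⟫ ^ 2 ≤ (∑ i ∈ S, (z i) ^ 2) * ∑ i ∈ S, (x i) ^ 2 := hcs
            _ ≤ (∑ i ∈ S, (z i) ^ 2) * ‖x‖ ^ 2 := mul_le_mul_of_nonneg_left hxS hzSnn
      _ ≤ (sSup T * ‖x‖ ^ 2) * ‖z‖ ^ 2 := by
          exact mul_le_mul_of_nonneg_right
            (mul_le_mul_of_nonneg_right hzS (le_of_lt hx2)) (le_of_lt hz2)
      _ = sSup T * (‖z‖ ^ 2 * ‖x‖ ^ 2) := by ring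
  -- achiever
  set x₀ : EuclideanSpace ℝ (Fin n) := WithLp.toLp 2 (fun i => if i ∈ S₀ then z i else 0) with hx₀
  have hx₀norm : ‖x₀‖ ^ 2 = sSup T := by
    rw [my_norm_sq, hS₀]
    rw [← Finset.sum_subset S₀.subset_univ (fun i _ hiS => by simp [hx₀, hiS])]
    apply Finset.sum_congr rfl
    intro i hi
    simp [hx₀, hi]
  have hx₀ne : x₀ ≠ 0 := by
    intro h
    rw [h] at hx₀norm
    simp at hx₀norm
    exact absurd hx₀norm.symm (ne_of_gt hσpos)
  have hx₀inner : ⟪z, x₀⟫ = sSup T := by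
    rw [my_inner_eq, hS₀]
    rw [← Finset.sum_subset S₀.subset_univ (fun i _ hiS => by simp [hx₀, hiS])]
    apply Finset.sum_congr rfl
    intro i hi
    simp [hx₀, hi, sq]
  have hmemL : sSup T / ‖z‖ ^ 2 ∈ {v : ℝ | ∃ x ∈ sparse n (2 * k), x ≠ 0 ∧
      v = |‖x - projLine z x‖ ^ 2 / ‖x‖ ^ 2 - 1|} := by
    refine ⟨x₀, ⟨S₀, hS₀card, fun i hiS => by simp [hx₀, hiS]⟩, hx₀ne, ?_⟩
    rw [ratio_eq z x₀ hz hx₀ne, hx₀inner, hx₀norm]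
    field_simp
  have : IsGreatest {v : ℝ | ∃ x ∈ sparse n (2 * k), x ≠ 0 ∧
      v = |‖x - projLine z x‖ ^ 2 / ‖x‖ ^ 2 - 1|} (sSup T / ‖z‖ ^ 2) := ⟨hmemL, hub⟩
  rw [this.csSup_eq]
  rfl
end
end

section
/- Let 1 ≤ 2k ≤ n and let R : ℝⁿ → ℝ be such that T_R(Σ_k) ≠ {0}. Then the necessary-RIP compliance constant satisfies δ_nec(R) := inf_{z ∈ T_R(Σ_k), z≠0} δ_{Σ_{2k}}(I − Π_z) = inf_{z ∈ T_R(Σ_k), z≠0} σ_{2k}(z)²/‖z‖₂². -/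
noncomputable section

open RealInnerProductSpace

/-- Descent vectors of `R` at `x`. -/
def descentSet {H : Type*} [AddCommGroup H] (R : H → ℝ) (x : H) : Set H :=
  {z | R (x + z) ≤ R x}

/-- Descent vectors of `R` at the model set `S`. -/
def descentCone {H : Type*} [AddCommGroup H] (R : H → ℝ) (S : Set H) : Set H :=
  ⋃ x ∈ S, descentSet R x

/-- The RIP constant of the map `M` on the `j`-sparse model. -/
def ripConst {n : ℕ} (j : ℕ) (M : EuclideanSpace ℝ (Fin n) → EuclideanSpace ℝ (Fin n)) : ℝ :=
  sSup {v : ℝ | ∃ x ∈ sparse n j, x ≠ 0 ∧ v = |‖M x‖ ^ 2 / ‖x‖ ^ 2 - 1|}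

lemma norm_sq_eq_sum {n : ℕ} (x : EuclideanSpace ℝ (Fin n)) : ‖x‖ ^ 2 = ∑ i, x i ^ 2 := by
  rw [EuclideanSpace.norm_eq, Real.sq_sqrt (by positivity)]
  simp [sq_abs]

lemma inner_eq_sum {n : ℕ} (x y : EuclideanSpace ℝ (Fin n)) : ⟪x, y⟫ = ∑ i, x i * y i := by
  simp [PiLp.inner_apply, RCLike.inner_apply, mul_comm]

lemma key (n j : ℕ) (hj : 1 ≤ j) (z : EuclideanSpace ℝ (Fin n)) (hz : z ≠ 0) :
    ripConst j (fun x => x - projLine z x) = sigmaSq n j z / ‖z‖ ^ 2 := by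
  have hzn : (0:ℝ) < ‖z‖ ^ 2 := pow_pos (norm_pos_iff.mpr hz) 2
  set σ := sigmaSq n j z with hσdef
  set V : Set ℝ := {v : ℝ | ∃ S : Finset (Fin n), S.card ≤ j ∧ v = ∑ i ∈ S, (z i) ^ 2} with hV
  have hVfin : V.Finite := by
    apply Set.Finite.subset (Set.finite_range (fun S : Finset (Fin n) => ∑ i ∈ S, (z i) ^ 2))
    rintro v ⟨S, _, rfl⟩; exact ⟨S, rfl⟩
  have hVne : V.Nonempty := ⟨0, ∅, by simp⟩
  have hmem : σ ∈ V := hVne.csSup_mem hVfin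
  have hub : ∀ v ∈ V, v ≤ σ := fun v hv => le_csSup hVfin.bddAbove hv
  obtain ⟨S, hScard, hSval⟩ := hmem
  -- σ > 0
  obtain ⟨i₀, hi₀⟩ : ∃ i, z i ≠ 0 := by
    by_contra h; push_neg at h; exact hz (by ext i; simpa using h i)
  have hσpos : 0 < σ := by
    have h1 : z i₀ ^ 2 ∈ V := ⟨{i₀}, by simpa using hj, by simp⟩
    have := hub _ h1
    have h2 : 0 < z i₀ ^ 2 := by positivity
    linarith
  -- the maximizer w
  set w : EuclideanSpace ℝ (Fin n) := WithLp.toLp 2 (fun i => if i ∈ S then z i else 0 : Fin n → ℝ) with hw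
  have hwinner : ⟪z, w⟫ = σ := by
    rw [inner_eq_sum, hSval]
    rw [show (∑ i, z i * w i) = ∑ i, if i ∈ S then z i ^ 2 else 0 by
      apply Finset.sum_congr rfl; intro i _
      by_cases h : i ∈ S <;> simp [hw, h, sq]]
    rw [Finset.sum_ite_mem, Finset.univ_inter]
  have hwnorm : ‖w‖ ^ 2 = σ := by
    rw [norm_sq_eq_sum, hSval]
    rw [show (∑ i, w i ^ 2) = ∑ i, if i ∈ S then z i ^ 2 else 0 by
      apply Finset.sum_congr rfl; intro i _
      by_cases h : i ∈ S <;> simp [hw, h]]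
    rw [Finset.sum_ite_mem, Finset.univ_inter]
  have hwne : w ≠ 0 := by
    intro h; rw [h] at hwnorm; simp at hwnorm; exact absurd hwnorm.symm (ne_of_gt hσpos)
  have hwsp : w ∈ sparse n j := ⟨S, hScard, fun i hi => if_neg hi⟩
  -- value formula
  have hval : ∀ x : EuclideanSpace ℝ (Fin n), x ≠ 0 →
      |‖x - projLine z x‖ ^ 2 / ‖x‖ ^ 2 - 1| = ⟪z, x⟫ ^ 2 / (‖z‖ ^ 2 * ‖x‖ ^ 2) := by
    intro x hx
    have hxn : (0:ℝ) < ‖x‖ ^ 2 := pow_pos (norm_pos_iff.mpr hx) 2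
    have hnorm : ‖x - projLine z x‖ ^ 2 = ‖x‖ ^ 2 - ⟪z, x⟫ ^ 2 / ‖z‖ ^ 2 := by
      rw [projLine, norm_sub_sq_real, real_inner_smul_right, norm_smul, mul_pow,
        Real.norm_eq_abs, sq_abs, real_inner_comm x z]
      field_simp
      ring
    have heq : ‖x - projLine z x‖ ^ 2 / ‖x‖ ^ 2 - 1 = -(⟪z, x⟫ ^ 2 / (‖z‖ ^ 2 * ‖x‖ ^ 2)) := by
      rw [hnorm]; field_simp; ring
    rw [heq, abs_neg, abs_of_nonneg (by positivity)]
  -- upper bound via Cauchy-Schwarz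
  have hbound : ∀ x ∈ sparse n j, x ≠ 0 →
      ⟪z, x⟫ ^ 2 / (‖z‖ ^ 2 * ‖x‖ ^ 2) ≤ σ / ‖z‖ ^ 2 := by
    rintro x ⟨S', hS'card, hS'⟩ hx
    have hxn : (0:ℝ) < ‖x‖ ^ 2 := pow_pos (norm_pos_iff.mpr hx) 2
    have hin : ⟪z, x⟫ = ∑ i ∈ S', z i * x i := by
      rw [inner_eq_sum, ← Finset.sum_subset (Finset.subset_univ S')]
      intro i _ hi; rw [hS' i hi, mul_zero]
    have hxs : ‖x‖ ^ 2 = ∑ i ∈ S', x i ^ 2 := by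
      rw [norm_sq_eq_sum, ← Finset.sum_subset (Finset.subset_univ S')]
      intro i _ hi; rw [hS' i hi]; ring
    have hcs : ⟪z, x⟫ ^ 2 ≤ (∑ i ∈ S', z i ^ 2) * ‖x‖ ^ 2 := by
      rw [hin, hxs]; exact Finset.sum_mul_sq_le_sq_mul_sq S' _ _
    have hsz : (∑ i ∈ S', z i ^ 2) ≤ σ := hub _ ⟨S', hS'card, rfl⟩
    rw [div_le_div_iff₀ (by positivity) hzn]
    calc ⟪z, x⟫ ^ 2 * ‖z‖ ^ 2 ≤ ((∑ i ∈ S', z i ^ 2) * ‖x‖ ^ 2) * ‖z‖ ^ 2 := by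
          gcongr
    _ ≤ (σ * ‖x‖ ^ 2) * ‖z‖ ^ 2 := by gcongr <;> positivity
    _ = σ * (‖z‖ ^ 2 * ‖x‖ ^ 2) := by ring
  -- IsGreatest
  apply IsGreatest.csSup_eq
  constructor
  · refine ⟨w, hwsp, hwne, ?_⟩
    rw [hval w hwne, hwinner, hwnorm]
    field_simp
  · rintro v ⟨x, hxsp, hxne, rfl⟩
    rw [hval x hxne]
    exact hbound x hxsp hxne

theorem stmt7 (n k : ℕ) (h1 : 1 ≤ 2 * k) (h2 : 2 * k ≤ n)
    (R : EuclideanSpace ℝ (Fin n) → ℝ)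
    (hT : descentCone R (sparse n k) ≠ {0}) :
    sInf {d : ℝ | ∃ z ∈ descentCone R (sparse n k), z ≠ 0 ∧
        d = ripConst (2 * k) fun x => x - projLine z x} =
      sInf {d : ℝ | ∃ z ∈ descentCone R (sparse n k), z ≠ 0 ∧
        d = sigmaSq n (2 * k) z / ‖z‖ ^ 2} := by
  congr 1
  ext d
  constructor
  · rintro ⟨z, hz, hz0, rfl⟩
    exact ⟨z, hz, hz0, key n (2 * k) h1 z hz0⟩
  · rintro ⟨z, hz, hz0, rfl⟩
    exact ⟨z, hz, hz0, (key n (2 * k) h1 z hz0).symm⟩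
end
end

section
/- Let n ≥ 2k ≥ 2. For every set of atoms A ⊆ Σ_k with sup_{a∈A} ‖a‖₂ = 1, one has B_Σ(‖·‖_A) ≥ B_Σ(‖·‖₁), where B_Σ(R) = sup_{z ∈ T_R(Σ_k), z≠0} (‖z‖₂² − σ_{2k}(z)²)/σ_{2k}(z)² ∈ [0,∞]. That is, the ℓ¹-norm minimizes B_Σ over atomic norms with unit-norm atoms contained in Σ_k. -/
noncomputable section

open scoped Pointwise ENNReal

/-- The atomic norm generated by the set of atoms `A`. -/
def atomicNorm {n : ℕ} (A : Set (EuclideanSpace ℝ (Fin n)))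
    (x : EuclideanSpace ℝ (Fin n)) : ℝ :=
  sInf {t : ℝ | 0 ≤ t ∧ x ∈ t • closure (convexHull ℝ A)}

/-- The quantity `B_Σ(R) ∈ [0, ∞]`. -/
def BSigma (n k : ℕ) (R : EuclideanSpace ℝ (Fin n) → ℝ) : ℝ≥0∞ :=
  sSup {v : ℝ≥0∞ | ∃ z ∈ descentCone R (sparse n k), z ≠ 0 ∧
    v = ENNReal.ofReal ((‖z‖ ^ 2 - sigmaSq n (2 * k) z) / sigmaSq n (2 * k) z)}

/-! ### Auxiliary lemmas -/

/-- Top-`m` selection. -/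
lemma topk_select {ι : Type*} [DecidableEq ι] (f : ι → ℝ) :
    ∀ (m : ℕ) (s : Finset ι), m ≤ s.card →
      ∃ B ⊆ s, B.card = m ∧ ∀ i ∈ B, ∀ j ∈ s \ B, f j ≤ f i := by
  intro m
  induction m with
  | zero => exact fun s _ => ⟨∅, Finset.empty_subset _, rfl, by simp⟩
  | succ m ih =>
    intro s hs
    have hne : s.Nonempty := Finset.card_pos.mp (by omega)
    obtain ⟨a, ha, hmax⟩ := s.exists_max_image f hne
    have hm : m ≤ (s.erase a).card := by rw [Finset.card_erase_of_mem ha]; omega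
    obtain ⟨B, hBs, hBc, hB⟩ := ih (s.erase a) hm
    have haB : a ∉ B := fun h => (Finset.mem_erase.mp (hBs h)).1 rfl
    refine ⟨insert a B, ?_, ?_, ?_⟩
    · intro x hx
      rcases Finset.mem_insert.mp hx with rfl | hx
      · exact ha
      · exact (Finset.mem_erase.mp (hBs hx)).2
    · rw [Finset.card_insert_of_notMem haB, hBc]
    · intro i hi j hj
      have hjs : j ∈ s := (Finset.mem_sdiff.mp hj).1
      have hjB : j ∉ insert a B := (Finset.mem_sdiff.mp hj).2
      rcases Finset.mem_insert.mp hi with rfl | hi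
      · exact hmax j hjs
      · refine hB i hi j (Finset.mem_sdiff.mpr ⟨Finset.mem_erase.mpr ⟨?_, hjs⟩, ?_⟩)
        · rintro rfl; exact hjB (Finset.mem_insert_self _ _)
        · exact fun h => hjB (Finset.mem_insert_of_mem h)

lemma normsq_eq (n : ℕ) (u : EuclideanSpace ℝ (Fin n)) : ‖u‖ ^ 2 = ∑ i, (u i) ^ 2 := by
  rw [EuclideanSpace.norm_eq, Real.sq_sqrt (by positivity)]
  congr 1; ext i; rw [Real.norm_eq_abs, sq_abs]

lemma sigmaSq_bddAbove (n j : ℕ) (u : EuclideanSpace ℝ (Fin n)) :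
    BddAbove {v : ℝ | ∃ S : Finset (Fin n), S.card ≤ j ∧ v = ∑ i ∈ S, (u i) ^ 2} := by
  refine ⟨∑ i, (u i) ^ 2, ?_⟩
  rintro v ⟨S, _, rfl⟩
  exact Finset.sum_le_sum_of_subset_of_nonneg (Finset.subset_univ S)
    (fun i _ _ => sq_nonneg _)

lemma le_sigmaSq {n j : ℕ} (u : EuclideanSpace ℝ (Fin n)) (T : Finset (Fin n))
    (hT : T.card ≤ j) : ∑ i ∈ T, (u i) ^ 2 ≤ sigmaSq n j u :=
  le_csSup (sigmaSq_bddAbove n j u) ⟨T, hT, rfl⟩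

lemma sigmaSq_le {n j : ℕ} (u : EuclideanSpace ℝ (Fin n)) {c : ℝ}
    (h : ∀ T : Finset (Fin n), T.card ≤ j → ∑ i ∈ T, (u i) ^ 2 ≤ c) :
    sigmaSq n j u ≤ c := by
  refine csSup_le ⟨0, ∅, by simp⟩ ?_
  rintro v ⟨T, hT, rfl⟩
  exact h T hT

lemma sigmaSq_le_normsq {n j : ℕ} (u : EuclideanSpace ℝ (Fin n)) :
    sigmaSq n j u ≤ ‖u‖ ^ 2 := by
  rw [normsq_eq]
  exact sigmaSq_le u (fun T _ => Finset.sum_le_sum_of_subset_of_nonneg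
    (Finset.subset_univ T) (fun i _ _ => sq_nonneg _))

lemma exists_ne_coord {n : ℕ} {u : EuclideanSpace ℝ (Fin n)} (hu : u ≠ 0) :
    ∃ i, u i ≠ 0 := by
  by_contra h
  push_neg at h
  exact hu (PiLp.ext h)

lemma sigmaSq_pos {n j : ℕ} (hj : 1 ≤ j) {u : EuclideanSpace ℝ (Fin n)} (hu : u ≠ 0) :
    0 < sigmaSq n j u := by
  obtain ⟨i, hi⟩ := exists_ne_coord hu
  have h1 : (u i) ^ 2 ≤ sigmaSq n j u := by
    have := le_sigmaSq u {i} (by simpa using hj)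
    simpa using this
  have : 0 < (u i) ^ 2 := by positivity
  linarith

/-- The averaging bound : `2k * ‖z‖² ≤ n * σ_{2k}(z)²`. -/
lemma avg_bound {n k : ℕ} (hn : 2 * k ≤ n) (z : EuclideanSpace ℝ (Fin n)) :
    (2 * k : ℝ) * ‖z‖ ^ 2 ≤ (n : ℝ) * sigmaSq n (2 * k) z := by
  have hcard : 2 * k ≤ (Finset.univ : Finset (Fin n)).card := by
    simpa using hn
  obtain ⟨B, _, hBc, hB⟩ := topk_select (fun i => (z i) ^ 2) (2 * k) Finset.univ hcard
  set P := ∑ i ∈ B, (z i) ^ 2 with hP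
  have hPs : P ≤ sigmaSq n (2 * k) z := le_sigmaSq z B (le_of_eq hBc)
  have hoff : ∀ j ∈ Finset.univ \ B, (2 * k : ℝ) * (z j) ^ 2 ≤ P := by
    intro j hj
    have h1 : ∀ i ∈ B, (z j) ^ 2 ≤ (z i) ^ 2 := fun i hi => hB i hi j hj
    have := Finset.card_nsmul_le_sum B (fun i => (z i) ^ 2) ((z j) ^ 2)
      (fun i hi => h1 i hi)
    rw [hBc] at this
    simpa [nsmul_eq_mul, mul_comm] using this
  have hsum : (2 * k : ℝ) * (∑ j ∈ Finset.univ \ B, (z j) ^ 2)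
      ≤ (n - 2 * k : ℝ) * P := by
    rw [Finset.mul_sum]
    have hcard2 : ((Finset.univ \ B).card : ℝ) = (n : ℝ) - 2 * k := by
      rw [Finset.card_sdiff_of_subset (Finset.subset_univ B), hBc, Finset.card_univ,
        Fintype.card_fin, Nat.cast_sub hn]
      push_cast
      ring
    calc ∑ j ∈ Finset.univ \ B, (2 * k : ℝ) * (z j) ^ 2
        ≤ ∑ j ∈ Finset.univ \ B, P := Finset.sum_le_sum hoff
      _ = ((Finset.univ \ B).card : ℝ) * P := by rw [Finset.sum_const, nsmul_eq_mul]
      _ = (n - 2 * k : ℝ) * P := by rw [hcard2]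
  have hsplit : ∑ i, (z i) ^ 2 = P + ∑ j ∈ Finset.univ \ B, (z j) ^ 2 := by
    rw [hP, ← Finset.sum_sdiff (Finset.subset_univ B)]
    ring
  have hPn : 0 ≤ P := Finset.sum_nonneg (fun i _ => sq_nonneg _)
  rw [normsq_eq, hsplit]
  nlinarith [hPs, hsum, hPn, sq_nonneg ((n : ℝ) - 2 * k)]
/-! ### Atomic norm machinery -/

section Atomic

variable {n : ℕ} {A : Set (EuclideanSpace ℝ (Fin n))}

/-- Abbreviation for the closed convex hull of the atoms. -/
def CC {n : ℕ} (A : Set (EuclideanSpace ℝ (Fin n))) : Set (EuclideanSpace ℝ (Fin n)) :=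
  closure (convexHull ℝ A)

/-- The cone generated by `CC A`. -/
def coneA {n : ℕ} (A : Set (EuclideanSpace ℝ (Fin n))) : Set (EuclideanSpace ℝ (Fin n)) :=
  {y | ∃ r : ℝ, 0 ≤ r ∧ y ∈ r • CC A}

lemma atomicNorm_eq (x : EuclideanSpace ℝ (Fin n)) :
    atomicNorm A x = sInf {t : ℝ | 0 ≤ t ∧ x ∈ t • CC A} := rfl

lemma CC_convex : Convex ℝ (CC A) := (convex_convexHull ℝ A).closure

lemma CC_closed : IsClosed (CC A) := isClosed_closure

lemma atomicNorm_nonneg (x : EuclideanSpace ℝ (Fin n)) : 0 ≤ atomicNorm A x :=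
  Real.sInf_nonneg (fun _ ht => ht.1)

lemma atomicNorm_le_of_mem {x : EuclideanSpace ℝ (Fin n)} {s : ℝ} (hs : 0 ≤ s)
    (hx : x ∈ s • CC A) : atomicNorm A x ≤ s :=
  csInf_le ⟨0, fun _ ht => ht.1⟩ ⟨hs, hx⟩

lemma memC_add {x y : EuclideanSpace ℝ (Fin n)} {s r : ℝ} (hs : 0 ≤ s) (hr : 0 ≤ r)
    (hx : x ∈ s • CC A) (hy : y ∈ r • CC A) : x + y ∈ (s + r) • CC A := by
  obtain ⟨c₁, hc₁, rfl⟩ := hx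
  obtain ⟨c₂, hc₂, rfl⟩ := hy
  rcases eq_or_lt_of_le (add_nonneg hs hr) with h0 | h0
  · have hs0 : s = 0 := by linarith
    have hr0 : r = 0 := by linarith
    subst hs0; subst hr0
    simpa using ⟨c₁, hc₁, by simp⟩
  · have hmem : (s / (s + r)) • c₁ + (r / (s + r)) • c₂ ∈ CC A :=
      CC_convex hc₁ hc₂ (by positivity) (by positivity) (by field_simp)
    refine ⟨_, hmem, ?_⟩
    show (s + r) • ((s / (s + r)) • c₁ + (r / (s + r)) • c₂) = s • c₁ + r • c₂
    rw [smul_add, smul_smul, smul_smul]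
    congr 1 <;> congr 1 <;> field_simp
lemma memC_smul {x : EuclideanSpace ℝ (Fin n)} {s a : ℝ} (ha : 0 ≤ a)
    (hx : x ∈ s • CC A) : a • x ∈ (a * s) • CC A := by
  obtain ⟨c, hc, rfl⟩ := hx
  exact ⟨c, hc, by rw [smul_smul]⟩

lemma convsum {ι : Type*} (s : Finset ι) (y : ι → EuclideanSpace ℝ (Fin n)) (c : ι → ℝ)
    (hC : (CC A).Nonempty)
    (h : ∀ i ∈ s, 0 ≤ c i ∧ y i ∈ c i • CC A) :
    (0 ≤ ∑ i ∈ s, c i) ∧ (∑ i ∈ s, y i) ∈ (∑ i ∈ s, c i) • CC A := by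
  classical
  induction s using Finset.induction_on with
  | empty =>
    refine ⟨by simp, ?_⟩
    simp only [Finset.sum_empty]
    rw [Set.zero_smul_set hC]
    simp
  | @insert a s' hnotmem ih =>
    have ha := h a (Finset.mem_insert_self a s')
    have hih := ih (fun i hi => h i (Finset.mem_insert_of_mem hi))
    rw [Finset.sum_insert hnotmem, Finset.sum_insert hnotmem]
    exact ⟨add_nonneg ha.1 hih.1, memC_add ha.1 hih.1 ha.2 hih.2⟩

lemma cone_smul {y : EuclideanSpace ℝ (Fin n)} {a : ℝ} (ha : 0 ≤ a) (hy : y ∈ coneA A) :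
    a • y ∈ coneA A := by
  obtain ⟨r, hr, hm⟩ := hy
  exact ⟨a * r, mul_nonneg ha hr, memC_smul ha hm⟩

lemma cone_combo {y₁ y₂ : EuclideanSpace ℝ (Fin n)} {a b : ℝ} (ha : 0 ≤ a) (hb : 0 ≤ b)
    (h₁ : y₁ ∈ coneA A) (h₂ : y₂ ∈ coneA A) : a • y₁ + b • y₂ ∈ coneA A := by
  obtain ⟨r₁, hr₁, hm₁⟩ := cone_smul ha h₁
  obtain ⟨r₂, hr₂, hm₂⟩ := cone_smul hb h₂
  exact ⟨r₁ + r₂, add_nonneg hr₁ hr₂, memC_add hr₁ hr₂ hm₁ hm₂⟩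

/-- If the defining set is nonempty, the infimum is attained. -/
lemma atomicNorm_attained (hCb : CC A ⊆ Metric.closedBall 0 1)
    {x : EuclideanSpace ℝ (Fin n)} (hx : x ∈ coneA A) :
    x ∈ (atomicNorm A x) • CC A := by
  set Z := {t : ℝ | 0 ≤ t ∧ x ∈ t • CC A} with hZ
  have hKcpt : IsCompact (CC A) :=
    IsCompact.of_isClosed_subset (isCompact_closedBall 0 1) CC_closed hCb
  have hclosed : IsClosed Z := by
    rw [← isSeqClosed_iff_isClosed]
    intro tm t htm hlim
    have h0t : 0 ≤ t := ge_of_tendsto hlim (Filter.Eventually.of_forall (fun m => (htm m).1))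
    have hcm : ∀ m, ∃ c ∈ CC A, tm m • c = x := fun m => (htm m).2
    choose cm hcm1 hcm2 using hcm
    obtain ⟨c, hc, φ, hφ, hcc⟩ := hKcpt.tendsto_subseq hcm1
    have hlim' : Filter.Tendsto (fun m => tm (φ m) • cm (φ m)) Filter.atTop (nhds (t • c)) :=
      Filter.Tendsto.smul (hlim.comp hφ.tendsto_atTop) hcc
    have hconst : ∀ m, tm (φ m) • cm (φ m) = x := fun m => hcm2 (φ m)
    have : Filter.Tendsto (fun _ : ℕ => x) Filter.atTop (nhds (t • c)) := by
      simpa [hconst] using hlim'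
    have hx' : t • c = x := (tendsto_nhds_unique tendsto_const_nhds this).symm
    exact ⟨h0t, ⟨c, hc, hx'⟩⟩
  have hne : Z.Nonempty := by
    obtain ⟨r, hr, hm⟩ := hx
    exact ⟨r, hr, hm⟩
  have := hclosed.csInf_mem hne ⟨0, fun _ ht => ht.1⟩
  exact this.2

lemma norm_le_of_memC {x : EuclideanSpace ℝ (Fin n)} {s : ℝ} (hs : 0 ≤ s)
    (hCb : CC A ⊆ Metric.closedBall 0 1) (hx : x ∈ s • CC A) : ‖x‖ ≤ s := by
  obtain ⟨c, hc, rfl⟩ := hx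
  have : ‖c‖ ≤ 1 := by simpa [Metric.mem_closedBall] using hCb hc
  rw [norm_smul, Real.norm_eq_abs, abs_of_nonneg hs]
  nlinarith [norm_nonneg c]

end Atomic
/-! ### Sign vectors, indicators, patterns -/

def signv (n : ℕ) (ε : Fin n → Bool) : EuclideanSpace ℝ (Fin n) :=
  WithLp.toLp 2 (fun i => if ε i then (1:ℝ) else -1)

def indv (n : ℕ) (Λ : Finset (Fin n)) : EuclideanSpace ℝ (Fin n) :=
  WithLp.toLp 2 (fun i => if i ∈ Λ then (1:ℝ) else 0)

def patv (n k : ℕ) (T : Finset (Fin n)) : EuclideanSpace ℝ (Fin n) :=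
  WithLp.toLp 2 (fun i => if i ∈ T then (Real.sqrt k)⁻¹ else 0)

section CaseB

variable {n k : ℕ} {A : Set (EuclideanSpace ℝ (Fin n))}

lemma sum_coord {ι : Type*} (s : Finset ι) (f : ι → EuclideanSpace ℝ (Fin n)) (i : Fin n) :
    (∑ j ∈ s, f j) i = ∑ j ∈ s, f j i := by
  classical
  induction s using Finset.induction_on with
  | empty => simp
  | @insert a s' hnotmem ih =>
    rw [Finset.sum_insert hnotmem, Finset.sum_insert hnotmem, PiLp.add_apply, ih]

lemma zeroed_mem_cone (hall : ∀ ε : Fin n → Bool, signv n ε ∈ coneA A) :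
    ∀ (W : Finset (Fin n)) (σ : Fin n → ℝ), (∀ i, σ i = 1 ∨ σ i = -1) →
      (WithLp.toLp 2 (fun i => if i ∈ W then 0 else σ i) : EuclideanSpace ℝ (Fin n)) ∈ coneA A := by
  classical
  intro W
  induction W using Finset.induction_on with
  | empty =>
    intro σ hσ
    have : (WithLp.toLp 2 (fun i => if i ∈ (∅ : Finset (Fin n)) then 0 else σ i) :
        EuclideanSpace ℝ (Fin n)) = signv n (fun i => if σ i = 1 then true else false) := by
      ext i
      rcases hσ i with h1 | h1 <;> simp [signv, h1] <;> norm_num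
    rw [this]
    exact hall _
  | @insert j W hjW ih =>
    intro σ hσ
    have hσ₁ : ∀ i, Function.update σ j 1 i = 1 ∨ Function.update σ j 1 i = -1 := by
      intro i
      by_cases hij : i = j
      · subst hij; left; simp
      · rw [Function.update_of_ne hij]; exact hσ i
    have hσ₂ : ∀ i, Function.update σ j (-1) i = 1 ∨ Function.update σ j (-1) i = -1 := by
      intro i
      by_cases hij : i = j
      · subst hij; right; simp
      · rw [Function.update_of_ne hij]; exact hσ i
    have hdecomp : (WithLp.toLp 2 (fun i => if i ∈ insert j W then 0 else σ i) :
        EuclideanSpace ℝ (Fin n)) =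
        (1/2 : ℝ) • (WithLp.toLp 2 (fun i => if i ∈ W then 0 else Function.update σ j 1 i) :
          EuclideanSpace ℝ (Fin n)) +
        (1/2 : ℝ) • (WithLp.toLp 2 (fun i => if i ∈ W then 0 else Function.update σ j (-1) i) :
          EuclideanSpace ℝ (Fin n)) := by
      ext i
      have happ : ((1/2 : ℝ) • (WithLp.toLp 2 (fun i => if i ∈ W then 0 else Function.update σ j 1 i) :
          EuclideanSpace ℝ (Fin n)) +
          (1/2 : ℝ) • (WithLp.toLp 2 (fun i => if i ∈ W then 0 else Function.update σ j (-1) i) :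
          EuclideanSpace ℝ (Fin n))) i =
          (1/2 : ℝ) * (if i ∈ W then 0 else Function.update σ j 1 i) +
          (1/2 : ℝ) * (if i ∈ W then 0 else Function.update σ j (-1) i) := rfl
      rw [happ, PiLp.toLp_apply]
      by_cases hij : i = j
      · subst hij
        rw [if_pos (Finset.mem_insert_self i W), if_neg hjW, if_neg hjW,
          Function.update_self, Function.update_self]
        ring
      · by_cases hiW : i ∈ W
        · rw [if_pos (Finset.mem_insert_of_mem hiW), if_pos hiW, if_pos hiW]; ring
        · rw [if_neg (by simp [hij, hiW]), if_neg hiW, if_neg hiW,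
            Function.update_of_ne hij, Function.update_of_ne hij]
          ring
    rw [hdecomp]
    exact cone_combo (by norm_num) (by norm_num) (ih _ hσ₁) (ih _ hσ₂)

lemma indv_mem_cone (hall : ∀ ε : Fin n → Bool, signv n ε ∈ coneA A)
    (Λ : Finset (Fin n)) : indv n Λ ∈ coneA A := by
  classical
  have : indv n Λ = (WithLp.toLp 2 (fun i => if i ∈ Λᶜ then 0 else (1:ℝ)) :
      EuclideanSpace ℝ (Fin n)) := by
    ext i
    by_cases hi : i ∈ Λ <;> simp [indv, hi]
  rw [this]
  exact zeroed_mem_cone hall Λᶜ (fun _ => 1) (fun _ => Or.inl rfl)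

lemma patv_eq_smul (hk1 : 1 ≤ k) (T : Finset (Fin n)) :
    patv n k T = (Real.sqrt k)⁻¹ • indv n T := by
  ext i
  rw [PiLp.smul_apply, smul_eq_mul]
  by_cases hi : i ∈ T <;> simp [patv, indv, hi]

lemma indv_eq_smul_patv (hk1 : 1 ≤ k) (T : Finset (Fin n)) :
    indv n T = (Real.sqrt k) • patv n k T := by
  have hs : (0:ℝ) < Real.sqrt k := Real.sqrt_pos.mpr (by exact_mod_cast hk1)
  rw [patv_eq_smul hk1, smul_smul, mul_inv_cancel₀ (ne_of_gt hs), one_smul]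

lemma patv_mem_cone (hall : ∀ ε : Fin n → Bool, signv n ε ∈ coneA A)
    (hk1 : 1 ≤ k) (T : Finset (Fin n)) : patv n k T ∈ coneA A := by
  rw [patv_eq_smul hk1]
  exact cone_smul (by positivity) (indv_mem_cone hall T)

lemma count_mem_powersetCard {Λ : Finset (Fin n)} {i : Fin n} (hi : i ∈ Λ)
    (hk1 : 1 ≤ k) :
    ((Λ.powersetCard k).filter (fun K => i ∈ K)).card = (Λ.card - 1).choose (k-1) := by
  classical
  have hbij : ((Λ.powersetCard k).filter (fun K => i ∈ K)).card =
      ((Λ.erase i).powersetCard (k-1)).card := by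
    refine Finset.card_bij' (fun K _ => K.erase i) (fun K' _ => insert i K')
      (fun K hK => ?_) (fun K' hK' => ?_) (fun K hK => ?_) (fun K' hK' => ?_)
    · obtain ⟨hKmem, hKi⟩ := Finset.mem_filter.mp hK
      obtain ⟨hKΛ, hKc⟩ := Finset.mem_powersetCard.mp hKmem
      refine Finset.mem_powersetCard.mpr ⟨Finset.erase_subset_erase i hKΛ, ?_⟩
      rw [Finset.card_erase_of_mem hKi, hKc]
    · obtain ⟨hK'Λ, hK'c⟩ := Finset.mem_powersetCard.mp hK'
      have hiK' : i ∉ K' := fun h => (Finset.mem_erase.mp (hK'Λ h)).1 rfl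
      refine Finset.mem_filter.mpr ⟨Finset.mem_powersetCard.mpr ⟨?_, ?_⟩,
        Finset.mem_insert_self i K'⟩
      · exact Finset.insert_subset hi (hK'Λ.trans (Finset.erase_subset i Λ))
      · rw [Finset.card_insert_of_notMem hiK', hK'c]; omega
    · exact Finset.insert_erase (Finset.mem_filter.mp hK).2
    · obtain ⟨hK'Λ, _⟩ := Finset.mem_powersetCard.mp hK'
      exact Finset.erase_insert (fun h => (Finset.mem_erase.mp (hK'Λ h)).1 rfl)
  rw [hbij, Finset.card_powersetCard, Finset.card_erase_of_mem hi]

lemma fraccover (hk1 : 1 ≤ k) (hC : (CC A).Nonempty)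
    (hCb : CC A ⊆ Metric.closedBall 0 1) (gmax : ℝ) (hgmax0 : 0 ≤ gmax)
    (hgmax : ∀ K : Finset (Fin n), K.card = k → atomicNorm A (patv n k K) ≤ gmax)
    (hcone : ∀ K : Finset (Fin n), K.card = k → patv n k K ∈ coneA A)
    (Λ : Finset (Fin n)) (hΛ : k ≤ Λ.card) :
    ∃ s, 0 ≤ s ∧ s * Real.sqrt k ≤ (Λ.card : ℝ) * gmax ∧ indv n Λ ∈ s • CC A := by
  classical
  set P := Λ.powersetCard k with hP
  set Nc := (Λ.card - 1).choose (k-1) with hNc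
  have hNcpos : 0 < Nc := Nat.choose_pos (by omega)
  have hsqk : (0:ℝ) < Real.sqrt k := Real.sqrt_pos.mpr (by exact_mod_cast hk1)
  -- each member
  have hmem : ∀ K ∈ P, 0 ≤ (Nc:ℝ)⁻¹ * (Real.sqrt k * atomicNorm A (patv n k K)) ∧
      ((Nc:ℝ)⁻¹ • indv n K) ∈
        ((Nc:ℝ)⁻¹ * (Real.sqrt k * atomicNorm A (patv n k K))) • CC A := by
    intro K hK
    have hKc : K.card = k := (Finset.mem_powersetCard.mp hK).2
    have h1 : patv n k K ∈ (atomicNorm A (patv n k K)) • CC A :=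
      atomicNorm_attained hCb (hcone K hKc)
    have h2 : indv n K ∈ (Real.sqrt k * atomicNorm A (patv n k K)) • CC A := by
      rw [indv_eq_smul_patv hk1]
      exact memC_smul hsqk.le h1
    constructor
    · have := atomicNorm_nonneg (A := A) (patv n k K); positivity
    · exact memC_smul (by positivity) h2
  obtain ⟨hs0, hmemsum⟩ := convsum P _ _ hC hmem
  refine ⟨_, hs0, ?_, ?_⟩
  · -- the bound
    have hterm : ∀ K ∈ P, (Nc:ℝ)⁻¹ * (Real.sqrt k * atomicNorm A (patv n k K)) ≤
        (Nc:ℝ)⁻¹ * (Real.sqrt k * gmax) := by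
      intro K hK
      have hKc : K.card = k := (Finset.mem_powersetCard.mp hK).2
      have h1 := hgmax K hKc
      have h0 : (0:ℝ) ≤ (Nc:ℝ)⁻¹ := by positivity
      exact mul_le_mul_of_nonneg_left (mul_le_mul_of_nonneg_left h1 hsqk.le) h0
    have hsum_le : ∑ K ∈ P, (Nc:ℝ)⁻¹ * (Real.sqrt k * atomicNorm A (patv n k K)) ≤
        (P.card : ℝ) * ((Nc:ℝ)⁻¹ * (Real.sqrt k * gmax)) := by
      calc ∑ K ∈ P, (Nc:ℝ)⁻¹ * (Real.sqrt k * atomicNorm A (patv n k K))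
          ≤ ∑ _K ∈ P, (Nc:ℝ)⁻¹ * (Real.sqrt k * gmax) := Finset.sum_le_sum hterm
        _ = (P.card : ℝ) * ((Nc:ℝ)⁻¹ * (Real.sqrt k * gmax)) := by
            rw [Finset.sum_const, nsmul_eq_mul]
    refine (mul_le_mul_of_nonneg_right hsum_le hsqk.le).trans ?_
    have hPcard : P.card = Λ.card.choose k := by rw [hP, Finset.card_powersetCard]
    have hidnat : k * Λ.card.choose k = Λ.card * Nc := by
      have h1 : Λ.card - 1 + 1 = Λ.card := by omega
      have h2 : k - 1 + 1 = k := by omega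
      have hsucc := Nat.add_one_mul_choose_eq (Λ.card - 1) (k - 1)
      rw [h1, h2] at hsucc
      rw [hNc, Nat.mul_comm]
      exact hsucc.symm
    have hid : (k:ℝ) * (Λ.card.choose k : ℝ) = (Λ.card : ℝ) * (Nc:ℝ) := by
      exact_mod_cast hidnat
    have hkpos : (0:ℝ) < k := by exact_mod_cast hk1
    have hNcR : (0:ℝ) < (Nc:ℝ) := by exact_mod_cast hNcpos
    have hkne : (k:ℝ) ≠ 0 := ne_of_gt hkpos
    have hNcne : (Nc:ℝ) ≠ 0 := ne_of_gt hNcR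
    have hchoose : (Λ.card.choose k : ℝ) = (Λ.card : ℝ) * (Nc:ℝ) / k := by
      field_simp; linarith [hid]
    have hkk : Real.sqrt k * Real.sqrt k = (k:ℝ) :=
      Real.mul_self_sqrt (by positivity)
    apply le_of_eq
    rw [hPcard, hchoose]
    have e1 : (Λ.card : ℝ) * (Nc:ℝ) / k * ((Nc:ℝ)⁻¹ * (Real.sqrt k * gmax)) * Real.sqrt k
        = (Λ.card : ℝ) * gmax * ((Real.sqrt k * Real.sqrt k) / k) * ((Nc:ℝ) * (Nc:ℝ)⁻¹) := by
      ring
    rw [e1, hkk, div_self hkne, mul_inv_cancel₀ hNcne, mul_one, mul_one]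
  · -- the membership: the sum equals indv Λ
    have hsum_eq : ∑ K ∈ P, (Nc:ℝ)⁻¹ • indv n K = indv n Λ := by
      ext i
      rw [sum_coord]
      have : ∀ K, ((Nc:ℝ)⁻¹ • indv n K) i = (Nc:ℝ)⁻¹ * (if i ∈ K then 1 else 0) := by
        intro K; rw [PiLp.smul_apply, smul_eq_mul]; rfl
      simp only [this]
      rw [← Finset.mul_sum, Finset.sum_boole]
      by_cases hi : i ∈ Λ
      · have := count_mem_powersetCard (k := k) hi hk1
        rw [Finset.filter_congr (fun K _ => Iff.rfl)] at this
        rw [this]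
        have hNcR : (Nc:ℝ) ≠ 0 := by positivity
        simp [indv, hi, hNcR, ← hNc]
      · have hempty : P.filter (fun K => i ∈ K) = ∅ := by
          rw [Finset.filter_eq_empty_iff]
          intro K hK
          exact fun hiK => hi ((Finset.mem_powersetCard.mp hK).1 hiK)
        rw [hempty]
        simp [indv, hi]
    rw [← hsum_eq]
    exact hmemsum

end CaseB
section Cost

variable {n k : ℕ} {A : Set (EuclideanSpace ℝ (Fin n))}

/-- The layered cost bound: any nonnegative vector whose entries are all dominated by the
(equal) entries on a `k`-set `F` belongs to `s • CC A` with `s * √k ≤ (∑ v) * gmax`. -/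
lemma cost_aux (hk1 : 1 ≤ k) (hC : (CC A).Nonempty)
    (hCb : CC A ⊆ Metric.closedBall 0 1) (gmax : ℝ)
    (hgmax : ∀ K : Finset (Fin n), K.card = k → atomicNorm A (patv n k K) ≤ gmax)
    (hcone : ∀ K : Finset (Fin n), K.card = k → patv n k K ∈ coneA A)
    (F : Finset (Fin n)) (hF : F.card = k) :
    ∀ (N : ℕ) (v : EuclideanSpace ℝ (Fin n)), (∀ i, 0 ≤ v i) →
      (∀ i, ∀ j ∈ F, v i ≤ v j) →
      (Finset.univ.filter (fun i => v i ≠ 0)).card ≤ N →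
      ∃ s, 0 ≤ s ∧ s * Real.sqrt k ≤ (∑ i, v i) * gmax ∧ v ∈ s • CC A := by
  classical
  have hgmax0 : 0 ≤ gmax := by
    obtain ⟨F₀, -, hF₀⟩ := Finset.exists_subset_card_eq
      (le_of_eq hF.symm : k ≤ F.card)
    exact le_trans (atomicNorm_nonneg _) (hgmax F₀ hF₀)
  intro N
  induction N with
  | zero =>
    intro v hv hmaxF hcard
    have hv0 : v = 0 := by
      have hall0 : ∀ i, v i = 0 := by
        intro i
        by_contra hi
        have hmem : i ∈ Finset.univ.filter (fun j => v j ≠ 0) := by simp [hi]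
        have := Finset.card_pos.mpr ⟨i, hmem⟩
        omega
      ext i
      exact hall0 i
    refine ⟨0, le_refl 0, ?_, ?_⟩
    · have : (0:ℝ) ≤ (∑ i, v i) * gmax := by
        apply mul_nonneg (Finset.sum_nonneg (fun i _ => hv i)) hgmax0
      simpa using this
    · rw [hv0, Set.zero_smul_set hC]
      simp
  | succ N ih =>
    intro v hv hmaxF hcard
    by_cases hv0 : v = 0
    · refine ⟨0, le_refl 0, ?_, ?_⟩
      · have : (0:ℝ) ≤ (∑ i, v i) * gmax := by
          apply mul_nonneg (Finset.sum_nonneg (fun i _ => hv i)) hgmax0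
        simpa using this
      · rw [hv0, Set.zero_smul_set hC]
        simp
    · set Λ := Finset.univ.filter (fun i => v i ≠ 0) with hΛdef
      obtain ⟨i₀, hi₀⟩ := exists_ne_coord hv0
      have hΛne : Λ.Nonempty := ⟨i₀, by simp [hΛdef, hi₀]⟩
      have hi₀pos : 0 < v i₀ := lt_of_le_of_ne (hv i₀) (Ne.symm hi₀)
      have hFΛ : F ⊆ Λ := by
        intro j hj
        have : 0 < v j := lt_of_lt_of_le hi₀pos (hmaxF i₀ j hj)
        simp [hΛdef, ne_of_gt this]
      have hkΛ : k ≤ Λ.card := hF ▸ Finset.card_le_card hFΛ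
      have hposΛ : ∀ i ∈ Λ, 0 < v i := by
        intro i hi
        have : v i ≠ 0 := by simpa [hΛdef] using hi
        exact lt_of_le_of_ne (hv i) (Ne.symm this)
      set β := Λ.inf' hΛne v with hβdef
      have hβpos : 0 < β := (Finset.lt_inf'_iff hΛne).mpr hposΛ
      have hβle : ∀ j ∈ Λ, β ≤ v j := fun j hj => Finset.inf'_le v hj
      obtain ⟨jβ, hjβΛ, hjβ⟩ := Finset.exists_mem_eq_inf' hΛne v
      set v' : EuclideanSpace ℝ (Fin n) := WithLp.toLp 2 (fun i => if i ∈ Λ then v i - β else 0)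
        with hv'def
      have hv' : ∀ i, 0 ≤ v' i := by
        intro i
        by_cases hi : i ∈ Λ
        · simp only [hv'def, PiLp.toLp_apply, if_pos hi]
          linarith [hβle i hi]
        · simp [hv'def, if_neg hi]
      have hmaxF' : ∀ i, ∀ j ∈ F, v' i ≤ v' j := by
        intro i j hj
        have hjΛ : j ∈ Λ := hFΛ hj
        by_cases hi : i ∈ Λ
        · simp only [hv'def, PiLp.toLp_apply, if_pos hi, if_pos hjΛ]
          linarith [hmaxF i j hj]
        · simp only [hv'def, PiLp.toLp_apply, if_neg hi, if_pos hjΛ]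
          linarith [hβle j hjΛ]
      have hsupp' : Finset.univ.filter (fun i => v' i ≠ 0) ⊆ Λ.erase jβ := by
        intro i hi
        have hne : v' i ≠ 0 := by simpa using hi
        have hiΛ : i ∈ Λ := by
          by_contra h
          exact hne (by simp [hv'def, if_neg h])
        refine Finset.mem_erase.mpr ⟨?_, hiΛ⟩
        rintro rfl
        apply hne
        have hvv : v' i = v i - β := by simp [hv'def, if_pos hiΛ]
        rw [hvv, hβdef, hjβ, sub_self]
      have hcard' : (Finset.univ.filter (fun i => v' i ≠ 0)).card ≤ N := by
        have h1 := Finset.card_le_card hsupp'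
        rw [Finset.card_erase_of_mem hjβΛ] at h1
        have h2 : Λ.card ≤ N + 1 := hcard
        omega
      obtain ⟨s', hs'0, hs'le, hs'mem⟩ := ih v' hv' hmaxF' hcard'
      obtain ⟨sΛ, hsΛ0, hsΛle, hsΛmem⟩ := fraccover hk1 hC hCb gmax hgmax0 hgmax hcone Λ hkΛ
      have hdecomp : v = v' + β • indv n Λ := by
        ext i
        have happ : (v' + β • indv n Λ) i = v' i + β * (indv n Λ i) := rfl
        rw [happ]
        by_cases hi : i ∈ Λ
        · simp [hv'def, indv, if_pos hi]
        · have hvi : v i = 0 := by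
            by_contra h
            exact hi (by simp [hΛdef, h])
          simp [hv'def, indv, if_neg hi, hvi]
      refine ⟨s' + β * sΛ, by positivity, ?_, ?_⟩
      · have hsum' : ∑ i, v i = (∑ i, v' i) + β * Λ.card := by
          have e1 : ∑ i, v' i = (∑ i ∈ Λ, v i) - β * Λ.card := by
            rw [hv'def]
            have : ∀ i : Fin n, (WithLp.toLp 2 (fun i => if i ∈ Λ then v i - β else 0) :
                EuclideanSpace ℝ (Fin n)) i = if i ∈ Λ then v i - β else 0 := fun _ => rfl
            simp only [this]
            rw [Finset.sum_ite_mem, Finset.univ_inter, Finset.sum_sub_distrib,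
              Finset.sum_const, nsmul_eq_mul]
            ring
          have e2 : ∑ i, v i = ∑ i ∈ Λ, v i := by
            symm
            apply Finset.sum_subset (Finset.subset_univ Λ)
            intro i _ hiΛ
            by_contra h
            exact hiΛ (by simp [hΛdef, h])
          rw [e1, ← e2]
          ring
        have hb1 : (s' + β * sΛ) * Real.sqrt k
            = s' * Real.sqrt k + β * (sΛ * Real.sqrt k) := by ring
        rw [hb1, hsum']
        have hb2 : β * (sΛ * Real.sqrt k) ≤ β * ((Λ.card : ℝ) * gmax) :=
          mul_le_mul_of_nonneg_left hsΛle hβpos.le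
        have hb3 : ((∑ i, v' i) + β * Λ.card) * gmax
            = (∑ i, v' i) * gmax + β * ((Λ.card : ℝ) * gmax) := by ring
        rw [hb3]
        linarith
      · rw [hdecomp]
        exact memC_add hs'0 (by positivity) hs'mem (memC_smul hβpos.le hsΛmem)

end Cost
/-! ### The ℓ¹ descent cone -/

lemma ell1_descent {n k : ℕ} (hkn : k ≤ n) {z : EuclideanSpace ℝ (Fin n)}
    (hz : z ∈ descentCone (fun x : EuclideanSpace ℝ (Fin n) => ∑ i, |x i|) (sparse n k)) :
    ∃ S : Finset (Fin n), S.card = k ∧ ∑ j ∈ Sᶜ, |z j| ≤ ∑ j ∈ S, |z j| := by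
  classical
  rw [descentCone, Set.mem_iUnion₂] at hz
  obtain ⟨x, hx, hzx⟩ := hz
  obtain ⟨S₀, hS₀c, hS₀z⟩ := hx
  have hdesc : ∑ i, |x i + z i| ≤ ∑ i, |x i| := by
    have : ∀ i, (x + z) i = x i + z i := fun i => rfl
    simpa [this, descentSet] using hzx
  have hA1 : ∑ i ∈ S₀ᶜ, |x i + z i| = ∑ i ∈ S₀ᶜ, |z i| := by
    apply Finset.sum_congr rfl
    intro i hi
    rw [hS₀z i (Finset.mem_compl.mp hi), zero_add]
  have hA2 : ∑ i ∈ S₀ᶜ, |x i| = 0 := by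
    apply Finset.sum_eq_zero
    intro i hi
    rw [hS₀z i (Finset.mem_compl.mp hi), abs_zero]
  have hA3 : ∑ i ∈ S₀, |x i| ≤ ∑ i ∈ S₀, (|x i + z i| + |z i|) := by
    apply Finset.sum_le_sum
    intro i _
    have h := abs_add_le (x i + z i) (-z i)
    simp only [add_neg_cancel_right, abs_neg] at h
    exact h
  have hsplit1 := Finset.sum_compl_add_sum S₀ (fun i => |x i + z i|)
  have hsplit2 := Finset.sum_compl_add_sum S₀ (fun i => |x i|)
  rw [Finset.sum_add_distrib] at hA3
  have hkey : ∑ j ∈ S₀ᶜ, |z j| ≤ ∑ j ∈ S₀, |z j| := by linarith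
  obtain ⟨S, hS₀S, hSc⟩ := Finset.exists_superset_card_eq hS₀c
    (by rw [Fintype.card_fin]; exact hkn)
  refine ⟨S, hSc, ?_⟩
  have h1 : ∑ j ∈ Sᶜ, |z j| ≤ ∑ j ∈ S₀ᶜ, |z j| :=
    Finset.sum_le_sum_of_subset_of_nonneg (Finset.compl_subset_compl.mpr hS₀S)
      (fun i _ _ => abs_nonneg _)
  have h2 : ∑ j ∈ S₀, |z j| ≤ ∑ j ∈ S, |z j| :=
    Finset.sum_le_sum_of_subset_of_nonneg hS₀S (fun i _ _ => abs_nonneg _)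
  linarith
/-! ### The key construction in case B -/

set_option maxHeartbeats 1200000 in
lemma caseB_key {n k : ℕ} (hk1 : 1 ≤ k) (hn : 2 * k ≤ n)
    {A : Set (EuclideanSpace ℝ (Fin n))}
    (hC : (CC A).Nonempty) (hCb : CC A ⊆ Metric.closedBall 0 1)
    (hall : ∀ ε : Fin n → Bool, signv n ε ∈ coneA A)
    {z : EuclideanSpace ℝ (Fin n)} (hz0 : z ≠ 0)
    (S : Finset (Fin n)) (hS : S.card = k)
    (hl1 : ∑ j ∈ Sᶜ, |z j| ≤ ∑ j ∈ S, |z j|) :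
    ∃ z' ∈ descentCone (atomicNorm A) (sparse n k), z' ≠ 0 ∧
      (‖z‖ ^ 2 - sigmaSq n (2 * k) z) / sigmaSq n (2 * k) z ≤
      (‖z'‖ ^ 2 - sigmaSq n (2 * k) z') / sigmaSq n (2 * k) z' := by
  classical
  have hkpos : (0:ℝ) < k := by exact_mod_cast hk1
  have hsqk : (0:ℝ) < Real.sqrt k := Real.sqrt_pos.mpr hkpos
  have hkk : Real.sqrt k * Real.sqrt k = (k:ℝ) := Real.mul_self_sqrt hkpos.le
  have hcone : ∀ K : Finset (Fin n), K.card = k → patv n k K ∈ coneA A :=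
    fun K _ => patv_mem_cone hall hk1 K
  -- the maximal pattern
  have hPne : ((Finset.univ : Finset (Fin n)).powersetCard k).Nonempty :=
    Finset.powersetCard_nonempty.mpr (by rw [Finset.card_univ, Fintype.card_fin]; omega)
  obtain ⟨Tstar, hTP, hTmax⟩ :=
    ((Finset.univ : Finset (Fin n)).powersetCard k).exists_max_image
      (fun T => atomicNorm A (patv n k T)) hPne
  set gmax := atomicNorm A (patv n k Tstar) with hgdef
  have hTcard : Tstar.card = k := (Finset.mem_powersetCard.mp hTP).2
  have hgmax : ∀ K : Finset (Fin n), K.card = k → atomicNorm A (patv n k K) ≤ gmax :=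
    fun K hK => hTmax K (Finset.mem_powersetCard.mpr ⟨Finset.subset_univ K, hK⟩)
  have hgmax0 : 0 ≤ gmax := atomicNorm_nonneg _
  -- t
  set t := Real.sqrt (∑ i ∈ S, (z i) ^ 2) with htdef
  have ht2 : t ^ 2 = ∑ i ∈ S, (z i) ^ 2 :=
    Real.sq_sqrt (Finset.sum_nonneg (fun i _ => sq_nonneg _))
  have hSpos : 0 < ∑ i ∈ S, (z i) ^ 2 := by
    rcases lt_or_eq_of_le (Finset.sum_nonneg (fun i (_ : i ∈ S) => sq_nonneg (z i)))
      with h | h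
    · exact h
    · exfalso
      have hzero : ∀ i ∈ S, z i ^ 2 = 0 :=
        (Finset.sum_eq_zero_iff_of_nonneg (fun i _ => sq_nonneg (z i))).mp h.symm
      have hSz : ∀ i ∈ S, z i = 0 := fun i hi =>
        pow_eq_zero_iff (n := 2) (by norm_num) |>.mp (hzero i hi)
      have hSabs : ∑ j ∈ S, |z j| = 0 :=
        Finset.sum_eq_zero (fun j hj => by rw [hSz j hj, abs_zero])
      have hCabs : ∑ j ∈ Sᶜ, |z j| = 0 := by
        have h0 : 0 ≤ ∑ j ∈ Sᶜ, |z j| := Finset.sum_nonneg (fun j _ => abs_nonneg _)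
        linarith only [hl1, hSabs, h0]
      have hCz : ∀ j ∈ Sᶜ, z j = 0 := by
        intro j hj
        have := (Finset.sum_eq_zero_iff_of_nonneg
          (fun j (_ : j ∈ Sᶜ) => abs_nonneg (z j))).mp hCabs j hj
        exact abs_eq_zero.mp this
      apply hz0
      ext i
      by_cases hi : i ∈ S
      · exact hSz i hi
      · exact hCz i (Finset.mem_compl.mpr hi)
  have htpos : 0 < t := Real.sqrt_pos.mpr hSpos
  -- ℓ¹-Cauchy-Schwarz
  have hL : ∑ j ∈ S, |z j| ≤ Real.sqrt k * t := by
    have hcs : (∑ j ∈ S, |z j|) ^ 2 ≤ (k:ℝ) * t ^ 2 := by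
      have h := Finset.sum_mul_sq_le_sq_mul_sq S (fun _ => (1:ℝ)) (fun j => |z j|)
      simp only [one_mul, one_pow, sq_abs, Finset.sum_const, nsmul_eq_mul, mul_one] at h
      rw [hS] at h
      rw [ht2]
      exact h
    calc ∑ j ∈ S, |z j| = Real.sqrt ((∑ j ∈ S, |z j|) ^ 2) :=
          (Real.sqrt_sq (Finset.sum_nonneg (fun j _ => abs_nonneg _))).symm
      _ ≤ Real.sqrt ((k:ℝ) * t ^ 2) := Real.sqrt_le_sqrt hcs
      _ = Real.sqrt k * t := by
          rw [Real.sqrt_mul (by positivity), Real.sqrt_sq htpos.le]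
  -- top-k selection in Sᶜ
  have hcompl_card : Sᶜ.card = n - k := by
    rw [Finset.card_compl, hS, Fintype.card_fin]
  have hk_le : k ≤ Sᶜ.card := by omega
  obtain ⟨B, hBsub, hBcard, hBtop⟩ := topk_select (fun j => |z j|) k Sᶜ hk_le
  -- the threshold b
  obtain ⟨b, hb0, hsmall, hbig, hbud⟩ :
      ∃ b : ℝ, 0 ≤ b ∧ (∀ j ∈ Sᶜ \ B, |z j| ≤ b) ∧ (∀ i ∈ B, b ≤ |z i|) ∧
        ((k:ℝ) + 1) * b ≤ ∑ j ∈ Sᶜ, |z j| := by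
    rcases (Sᶜ \ B).eq_empty_or_nonempty with hres | hres
    · refine ⟨0, le_refl 0, ?_, fun i _ => abs_nonneg _, ?_⟩
      · intro j hj; rw [hres] at hj; exact absurd hj (Finset.notMem_empty j)
      · rw [mul_zero]; exact Finset.sum_nonneg (fun j _ => abs_nonneg _)
    · obtain ⟨j₀, hj₀, hmax'⟩ := (Sᶜ \ B).exists_max_image (fun j => |z j|) hres
      refine ⟨|z j₀|, abs_nonneg _, fun j hj => hmax' j hj, ?_, ?_⟩
      · intro i hi; exact hBtop i hi j₀ hj₀
      · have h1 : (k:ℝ) * |z j₀| ≤ ∑ i ∈ B, |z i| := by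
          have := Finset.card_nsmul_le_sum B (fun i => |z i|) (|z j₀|)
            (fun i hi => hBtop i hi j₀ hj₀)
          rw [hBcard] at this
          simpa [nsmul_eq_mul] using this
        have hj₀B : j₀ ∉ B := (Finset.mem_sdiff.mp hj₀).2
        have h2 : ∑ i ∈ B, |z i| + |z j₀| ≤ ∑ j ∈ Sᶜ, |z j| := by
          have e := Finset.sum_insert (f := fun j => |z j|) hj₀B
          have hsub2 : insert j₀ B ⊆ Sᶜ :=
            Finset.insert_subset (Finset.mem_sdiff.mp hj₀).1 hBsub
          have h3 := Finset.sum_le_sum_of_subset_of_nonneg hsub2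
            (fun i _ _ => abs_nonneg (z i))
          rw [e] at h3
          linarith only [h3]
        linarith only [h1, h2]
  have hsb : Real.sqrt k * b ≤ t := by
    have h1 : ((k:ℝ) + 1) * b ≤ Real.sqrt k * t := le_trans hbud (le_trans hl1 hL)
    have h2 : Real.sqrt k * (((k:ℝ) + 1) * b) ≤ Real.sqrt k * (Real.sqrt k * t) :=
      mul_le_mul_of_nonneg_left h1 hsqk.le
    have h3 : Real.sqrt k * (Real.sqrt k * t) = (k:ℝ) * t := by rw [← mul_assoc, hkk]
    have h4 : ((k:ℝ) + 1) * (Real.sqrt k * b) ≤ ((k:ℝ) + 1) * t := by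
      have h5 : (k:ℝ) * t ≤ ((k:ℝ) + 1) * t := by linarith only [htpos]
      calc ((k:ℝ) + 1) * (Real.sqrt k * b) = Real.sqrt k * (((k:ℝ) + 1) * b) := by ring
        _ ≤ (k:ℝ) * t := by rw [← h3]; exact h2
        _ ≤ ((k:ℝ) + 1) * t := h5
    exact le_of_mul_le_mul_left h4 (by positivity)
  have hbb : (k:ℝ) * b ^ 2 ≤ t ^ 2 := by
    have := pow_le_pow_left₀ (by positivity : (0:ℝ) ≤ Real.sqrt k * b) hsb 2
    calc (k:ℝ) * b ^ 2 = (Real.sqrt k * b) ^ 2 := by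
          rw [mul_pow, Real.sq_sqrt hkpos.le]
      _ ≤ t ^ 2 := this
  -- Q, Nv
  set Q := ∑ i ∈ B, (z i) ^ 2 with hQdef
  set Nv := ∑ j ∈ Sᶜ \ B, (z j) ^ 2 with hNvdef
  have hQ0 : 0 ≤ Q := Finset.sum_nonneg (fun i _ => sq_nonneg _)
  have hNv0 : 0 ≤ Nv := Finset.sum_nonneg (fun i _ => sq_nonneg _)
  have hQb2 : (k:ℝ) * b ^ 2 ≤ Q := by
    have h1 : ∀ i ∈ B, b ^ 2 ≤ (z i) ^ 2 := by
      intro i hi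
      have := pow_le_pow_left₀ hb0 (hbig i hi) 2
      rwa [sq_abs] at this
    have := Finset.card_nsmul_le_sum B (fun i => (z i) ^ 2) (b ^ 2) h1
    rw [hBcard] at this
    simpa [nsmul_eq_mul] using this
  have hnormz : ‖z‖ ^ 2 = t ^ 2 + Q + Nv := by
    rw [normsq_eq, ← Finset.sum_compl_add_sum S (fun i => (z i) ^ 2),
      ← Finset.sum_sdiff hBsub (f := fun i => (z i) ^ 2), ht2]
    ring
  have hdisjSB : Disjoint S B := by
    rw [Finset.disjoint_right]
    intro i hiB
    exact Finset.mem_compl.mp (hBsub hiB)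
  have hsigz : t ^ 2 + Q ≤ sigmaSq n (2 * k) z := by
    have hcard : (S ∪ B).card ≤ 2 * k := by
      rw [Finset.card_union_of_disjoint hdisjSB, hS, hBcard]; omega
    have := le_sigmaSq z (S ∪ B) hcard
    rwa [Finset.sum_union hdisjSB, ← ht2, ← hQdef] at this
  -- the slot set F and transfer bijection ψ
  have hTc_card : Tstarᶜ.card = n - k := by
    rw [Finset.card_compl, hTcard, Fintype.card_fin]
  obtain ⟨F, hFsub, hFcard⟩ := Finset.exists_subset_card_eq
    (show k ≤ Tstarᶜ.card by omega)
  have hcards : (Sᶜ \ B).card = (Tstarᶜ \ F).card := by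
    rw [Finset.card_sdiff_of_subset hBsub, Finset.card_sdiff_of_subset hFsub, hcompl_card, hTc_card,
      hBcard, hFcard]
  set ψ := Finset.equivOfCardEq hcards with hψdef
  -- the spread vector w
  set w : EuclideanSpace ℝ (Fin n) := WithLp.toLp 2 (fun j => if j ∈ F then b else
    if h : j ∈ Tstarᶜ \ F then |z ((ψ.symm ⟨j, h⟩ : {x // x ∈ Sᶜ \ B}) : Fin n)| else 0)
    with hwdef
  have hwF : ∀ j ∈ F, w j = b := by
    intro j hj
    simp only [hwdef, PiLp.toLp_apply]
    rw [if_pos hj]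
  have hwT : ∀ j, ∀ h : j ∈ Tstarᶜ \ F,
      w j = |z ((ψ.symm ⟨j, h⟩ : {x // x ∈ Sᶜ \ B}) : Fin n)| := by
    intro j h
    simp only [hwdef, PiLp.toLp_apply]
    rw [if_neg (Finset.mem_sdiff.mp h).2, dif_pos h]
  have hwelse : ∀ j, j ∉ F → j ∉ Tstarᶜ \ F → w j = 0 := by
    intro j h1 h2
    simp only [hwdef, PiLp.toLp_apply]
    rw [if_neg h1, dif_neg h2]
  have hwTstar : ∀ j ∈ Tstar, w j = 0 := by
    intro j hj
    apply hwelse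
    · intro h; exact (Finset.mem_compl.mp (hFsub h)) hj
    · intro h; exact (Finset.mem_compl.mp (Finset.mem_sdiff.mp h).1) hj
  have hw0 : ∀ j, 0 ≤ w j := by
    intro j
    by_cases h1 : j ∈ F
    · rw [hwF j h1]; exact hb0
    · by_cases h2 : j ∈ Tstarᶜ \ F
      · rw [hwT j h2]; exact abs_nonneg _
      · rw [hwelse j h1 h2]
  have hwb : ∀ j, w j ≤ b := by
    intro j
    by_cases h1 : j ∈ F
    · rw [hwF j h1]
    · by_cases h2 : j ∈ Tstarᶜ \ F
      · rw [hwT j h2]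
        exact hsmall _ (ψ.symm ⟨j, h2⟩).2
      · rw [hwelse j h1 h2]; exact hb0
  -- cost of w
  obtain ⟨s, hs0, hsle, hsmem⟩ := cost_aux hk1 hC hCb gmax hgmax hcone F hFcard n w hw0
    (fun i j hj => le_trans (hwb i) (le_of_eq (hwF j hj).symm))
    (le_trans (Finset.card_filter_le _ _) (by rw [Finset.card_univ, Fintype.card_fin]))
  -- sum of w
  have hdisjF : Disjoint F (Tstarᶜ \ F) := by
    rw [Finset.disjoint_right]
    intro j hj
    exact (Finset.mem_sdiff.mp hj).2
  have htransfer : ∀ f : ℝ → ℝ, f 0 = 0 → False → True := fun _ _ h => h.elim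
  have htrans1 : ∑ j ∈ Tstarᶜ \ F, w j = ∑ i ∈ Sᶜ \ B, |z i| := by
    rw [← Finset.sum_coe_sort (Tstarᶜ \ F) (fun j => w j),
      ← Finset.sum_coe_sort (Sᶜ \ B) (fun i => |z i|)]
    rw [← Equiv.sum_comp ψ.symm (fun i : {x // x ∈ Sᶜ \ B} => |z (i : Fin n)|)]
    apply Finset.sum_congr rfl
    intro j _
    exact hwT (j : Fin n) j.2
  have htrans2 : ∑ j ∈ Tstarᶜ \ F, (w j) ^ 2 = Nv := by
    rw [hNvdef, ← Finset.sum_coe_sort (Tstarᶜ \ F) (fun j => (w j) ^ 2),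
      ← Finset.sum_coe_sort (Sᶜ \ B) (fun i => (z i) ^ 2)]
    rw [← Equiv.sum_comp ψ.symm (fun i : {x // x ∈ Sᶜ \ B} => (z (i : Fin n)) ^ 2)]
    apply Finset.sum_congr rfl
    intro j _
    rw [hwT (j : Fin n) j.2, sq_abs]
  have hsumw : ∑ j, w j = (k:ℝ) * b + ∑ i ∈ Sᶜ \ B, |z i| := by
    have hsub : F ∪ (Tstarᶜ \ F) ⊆ Finset.univ := Finset.subset_univ _
    rw [← Finset.sum_subset hsub (fun j _ hj => ?_)]
    · rw [Finset.sum_union hdisjF, htrans1]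
      congr 1
      rw [Finset.sum_congr rfl (fun j hj => hwF j hj), Finset.sum_const, hFcard,
        nsmul_eq_mul]
    · apply hwelse
      · intro h; exact hj (Finset.mem_union_left _ h)
      · intro h; exact hj (Finset.mem_union_right _ h)
  have hbudget : ∑ j, w j ≤ Real.sqrt k * t := by
    have h1 : (k:ℝ) * b ≤ ∑ i ∈ B, |z i| := by
      have := Finset.card_nsmul_le_sum B (fun i => |z i|) b hbig
      rw [hBcard] at this
      simpa [nsmul_eq_mul] using this
    have h2 : ∑ i ∈ Sᶜ \ B, |z i| + ∑ i ∈ B, |z i| = ∑ i ∈ Sᶜ, |z i| :=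
      Finset.sum_sdiff hBsub
    rw [hsumw]
    linarith only [h1, h2, hl1, hL]
  have hsle2 : s ≤ t * gmax := by
    have h1 : s * Real.sqrt k ≤ (t * gmax) * Real.sqrt k := by
      calc s * Real.sqrt k ≤ (Real.sqrt k * t) * gmax :=
            le_trans hsle (mul_le_mul_of_nonneg_right hbudget hgmax0)
        _ = (t * gmax) * Real.sqrt k := by ring
    exact le_of_mul_le_mul_right h1 hsqk
  have hRw : atomicNorm A w ≤ t * gmax := le_trans (atomicNorm_le_of_mem hs0 hsmem) hsle2
  -- the anchor point x
  set x : EuclideanSpace ℝ (Fin n) := t • patv n k Tstar with hxdef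
  have hxi : ∀ i, x i = t * (if i ∈ Tstar then (Real.sqrt k)⁻¹ else 0) := fun i => rfl
  have hxsparse : x ∈ sparse n k := by
    refine ⟨Tstar, le_of_eq hTcard, fun i hi => ?_⟩
    rw [hxi, if_neg hi, mul_zero]
  have hRx : t * gmax ≤ atomicNorm A x := by
    apply le_csInf
    · obtain ⟨r, hr, hm⟩ := cone_smul htpos.le (hcone Tstar hTcard)
      exact ⟨r, hr, hm⟩
    · rintro r ⟨hr0, hrm⟩
      have h1 : patv n k Tstar ∈ (t⁻¹ * r) • CC A := by
        have h := memC_smul (inv_nonneg.mpr htpos.le) hrm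
        rwa [hxdef, smul_smul, inv_mul_cancel₀ (ne_of_gt htpos), one_smul] at h
      have h2 : gmax ≤ t⁻¹ * r := atomicNorm_le_of_mem (by positivity) h1
      calc t * gmax ≤ t * (t⁻¹ * r) := mul_le_mul_of_nonneg_left h2 htpos.le
        _ = r := by field_simp
  set z' := w - x with hz'def
  have hxz' : x + z' = w := by rw [hz'def]; abel
  have hdescent : z' ∈ descentCone (atomicNorm A) (sparse n k) := by
    apply Set.mem_biUnion hxsparse
    show atomicNorm A (x + z') ≤ atomicNorm A x
    rw [hxz']
    exact le_trans hRw hRx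
  -- coordinates of z'
  have hz'i : ∀ i, z' i = w i - x i := fun i => rfl
  have hz'T : ∀ i ∈ Tstar, z' i = -(t * (Real.sqrt k)⁻¹) := by
    intro i hi
    rw [hz'i, hwTstar i hi, hxi, if_pos hi]
    ring
  have hz'nT : ∀ j, j ∉ Tstar → z' j = w j := by
    intro j hj
    rw [hz'i, hxi, if_neg hj, mul_zero, sub_zero]
  have hTstar_ne : Tstar.Nonempty := Finset.card_pos.mp (by omega)
  obtain ⟨i₀, hi₀⟩ := hTstar_ne
  have hz'ne : z' ≠ 0 := by
    intro h
    have h1 : z' i₀ = 0 := by rw [h]; rfl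
    rw [hz'T i₀ hi₀] at h1
    have : t * (Real.sqrt k)⁻¹ > 0 := by positivity
    linarith
  have hz'sqT : ∀ i ∈ Tstar, (z' i) ^ 2 = t ^ 2 * ((k:ℝ))⁻¹ := by
    intro i hi
    rw [hz'T i hi, neg_sq, mul_pow]
    have e : ((Real.sqrt k)⁻¹) ^ 2 = ((k:ℝ))⁻¹ := by
      rw [inv_pow, Real.sq_sqrt hkpos.le]
    rw [e]
  -- ‖z'‖²
  have hnormz' : ‖z'‖ ^ 2 = t ^ 2 + ((k:ℝ) * b ^ 2 + Nv) := by
    rw [normsq_eq, ← Finset.sum_compl_add_sum Tstar (fun i => (z' i) ^ 2)]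
    have e1 : ∑ i ∈ Tstar, (z' i) ^ 2 = t ^ 2 := by
      rw [Finset.sum_congr rfl (fun i hi => hz'sqT i hi), Finset.sum_const, hTcard,
        nsmul_eq_mul]
      field_simp
    have e2 : ∑ i ∈ Tstarᶜ, (z' i) ^ 2 = (k:ℝ) * b ^ 2 + Nv := by
      rw [← Finset.sum_sdiff hFsub (f := fun i => (z' i) ^ 2)]
      have e3 : ∑ i ∈ Tstarᶜ \ F, (z' i) ^ 2 = Nv := by
        rw [← htrans2]
        apply Finset.sum_congr rfl
        intro j hj
        rw [hz'nT j (Finset.mem_compl.mp (Finset.mem_sdiff.mp hj).1)]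
      have e4 : ∑ i ∈ F, (z' i) ^ 2 = (k:ℝ) * b ^ 2 := by
        have : ∀ i ∈ F, (z' i) ^ 2 = b ^ 2 := by
          intro i hi
          rw [hz'nT i (Finset.mem_compl.mp (hFsub hi)), hwF i hi]
        rw [Finset.sum_congr rfl this, Finset.sum_const, hFcard, nsmul_eq_mul]
      rw [e3, e4]
      ring
    rw [e1, e2]
    ring
  -- σ(z') ≤ t² + k b²
  have hsig'le : sigmaSq n (2 * k) z' ≤ t ^ 2 + (k:ℝ) * b ^ 2 := by
    apply sigmaSq_le
    intro T hT
    rw [← Finset.sum_inter_add_sum_sdiff T Tstar (fun i => (z' i) ^ 2)]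
    have e5 : ∑ i ∈ T ∩ Tstar, (z' i) ^ 2 = ((T ∩ Tstar).card : ℝ) * (t ^ 2 * (k:ℝ)⁻¹) := by
      rw [Finset.sum_congr rfl (fun i hi => hz'sqT i (Finset.mem_inter.mp hi).2),
        Finset.sum_const, nsmul_eq_mul]
    have e6 : ∑ i ∈ T \ Tstar, (z' i) ^ 2 ≤ ((T \ Tstar).card : ℝ) * b ^ 2 := by
      calc ∑ i ∈ T \ Tstar, (z' i) ^ 2 ≤ ∑ i ∈ T \ Tstar, b ^ 2 := by
            apply Finset.sum_le_sum
            intro i hi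
            rw [hz'nT i (Finset.mem_sdiff.mp hi).2]
            exact pow_le_pow_left₀ (hw0 i) (hwb i) 2
        _ = ((T \ Tstar).card : ℝ) * b ^ 2 := by rw [Finset.sum_const, nsmul_eq_mul]
    rw [e5]
    have ha1 : (T ∩ Tstar).card ≤ k := hTcard ▸ Finset.card_le_card Finset.inter_subset_right
    have ha2 : (T ∩ Tstar).card + (T \ Tstar).card ≤ 2 * k := by
      rw [Finset.card_inter_add_card_sdiff]
      exact hT
    have ha1R : ((T ∩ Tstar).card : ℝ) ≤ (k:ℝ) := by exact_mod_cast ha1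
    have ha2R : ((T ∩ Tstar).card : ℝ) + ((T \ Tstar).card : ℝ) ≤ 2 * (k:ℝ) := by
      exact_mod_cast ha2
    have hu : (k:ℝ) * (t ^ 2 * (k:ℝ)⁻¹) = t ^ 2 := by field_simp
    have hb2u : b ^ 2 ≤ t ^ 2 * (k:ℝ)⁻¹ := by
      rw [← mul_le_mul_iff_right₀ hkpos, hu]
      exact hbb
    have p1 : 0 ≤ ((k:ℝ) - ((T ∩ Tstar).card : ℝ)) * (t ^ 2 * (k:ℝ)⁻¹ - b ^ 2) :=
      mul_nonneg (by linarith only [ha1R]) (by linarith only [hb2u])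
    have p2 : ((T \ Tstar).card : ℝ) * b ^ 2 ≤
        (2 * (k:ℝ) - ((T ∩ Tstar).card : ℝ)) * b ^ 2 :=
      mul_le_mul_of_nonneg_right (by linarith only [ha1R, ha2R]) (sq_nonneg b)
    linarith only [e6, p1, p2, hu]
  have hsig'pos : 0 < sigmaSq n (2 * k) z' := by
    have h1 : (z' i₀) ^ 2 ≤ sigmaSq n (2 * k) z' := by
      have := le_sigmaSq (j := 2 * k) z' {i₀} (by rw [Finset.card_singleton]; omega)
      simpa using this
    have h2 : 0 < (z' i₀) ^ 2 := by
      rw [hz'sqT i₀ hi₀]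
      positivity
    linarith only [h1, h2]
  -- final comparison
  set D := t ^ 2 + (k:ℝ) * b ^ 2 with hDdef
  have hD0 : 0 < D := by positivity
  have hσzD : D ≤ sigmaSq n (2 * k) z :=
    le_trans (by rw [hDdef]; linarith only [hQb2]) hsigz
  have hσz_pos : 0 < sigmaSq n (2 * k) z := lt_of_lt_of_le hD0 hσzD
  have hnum_z : ‖z‖ ^ 2 - sigmaSq n (2 * k) z ≤ Nv := by
    rw [hnormz]
    linarith only [hsigz]
  have hnum_z0 : 0 ≤ ‖z‖ ^ 2 - sigmaSq n (2 * k) z := by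
    linarith only [sigmaSq_le_normsq (j := 2 * k) z]
  have h1 : (‖z‖ ^ 2 - sigmaSq n (2 * k) z) / sigmaSq n (2 * k) z ≤ Nv / D := by
    calc (‖z‖ ^ 2 - sigmaSq n (2 * k) z) / sigmaSq n (2 * k) z
        ≤ (‖z‖ ^ 2 - sigmaSq n (2 * k) z) / D :=
          div_le_div_of_nonneg_left hnum_z0 hD0 hσzD
      _ ≤ Nv / D := by gcongr
  have h2 : Nv / D ≤ (‖z'‖ ^ 2 - sigmaSq n (2 * k) z') / sigmaSq n (2 * k) z' := by
    rw [div_le_div_iff₀ hD0 hsig'pos]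
    have hz'D : ‖z'‖ ^ 2 = D + Nv := by rw [hnormz', hDdef]; ring
    rw [hz'D]
    linarith only [mul_nonneg (add_nonneg hD0.le hNv0) (sub_nonneg.mpr hsig'le)]
  exact ⟨z', hdescent, hz'ne, le_trans h1 h2⟩
/-! ### Main theorem -/

set_option maxHeartbeats 1200000 in
theorem stmt12 (n k : ℕ) (hk : 2 ≤ 2 * k) (hn : 2 * k ≤ n)
    (A : Set (EuclideanSpace ℝ (Fin n))) (hA : A ⊆ sparse n k)
    (hnorm : sSup ((fun a : EuclideanSpace ℝ (Fin n) => ‖a‖) '' A) = 1) :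
    BSigma n k (fun x : EuclideanSpace ℝ (Fin n) => ∑ i, |x i|) ≤
      BSigma n k (atomicNorm A) := by
  classical
  have hk1 : 1 ≤ k := by omega
  have hn0 : 0 < n := by omega
  have hAne : A.Nonempty := by
    by_contra h
    rw [Set.not_nonempty_iff_eq_empty] at h
    rw [h, Set.image_empty, Real.sSup_empty] at hnorm
    norm_num at hnorm
  have hbdd : BddAbove ((fun a : EuclideanSpace ℝ (Fin n) => ‖a‖) '' A) := by
    by_contra h
    rw [Real.sSup_of_not_bddAbove h] at hnorm
    norm_num at hnorm
  have hA1 : ∀ a ∈ A, ‖a‖ ≤ 1 := by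
    intro a ha
    have := le_csSup hbdd (Set.mem_image_of_mem _ ha)
    rwa [hnorm] at this
  have hCb : CC A ⊆ Metric.closedBall 0 1 := by
    apply closure_minimal ?_ Metric.isClosed_closedBall
    apply convexHull_min ?_ (convex_closedBall 0 1)
    intro a ha
    rw [Metric.mem_closedBall, dist_zero_right]
    exact hA1 a ha
  have hC : (CC A).Nonempty := by
    obtain ⟨a, ha⟩ := hAne
    exact ⟨a, subset_closure (subset_convexHull ℝ A ha)⟩
  apply sSup_le
  rintro v ⟨z, hz, hzne, rfl⟩
  by_cases hcase : ∀ ε : Fin n → Bool, signv n ε ∈ coneA A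
  · -- case B : every sign vector generates
    obtain ⟨S, hScard, hl1⟩ := ell1_descent (by omega) hz
    obtain ⟨z', hz'mem, hz'ne, hineq⟩ := caseB_key hk1 hn hC hCb hcase hzne S hScard hl1
    calc ENNReal.ofReal ((‖z‖ ^ 2 - sigmaSq n (2 * k) z) / sigmaSq n (2 * k) z)
        ≤ ENNReal.ofReal ((‖z'‖ ^ 2 - sigmaSq n (2 * k) z') / sigmaSq n (2 * k) z') :=
          ENNReal.ofReal_le_ofReal hineq
      _ ≤ BSigma n k (atomicNorm A) := le_sSup ⟨z', hz'mem, hz'ne, rfl⟩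
  · -- case A : some sign vector is outside the cone
    push_neg at hcase
    obtain ⟨ε, hε⟩ := hcase
    have hRs : atomicNorm A (signv n ε) = 0 := by
      have hempty : {t : ℝ | 0 ≤ t ∧ signv n ε ∈ t • CC A} = ∅ := by
        rw [Set.eq_empty_iff_forall_notMem]
        rintro r ⟨hr0, hrm⟩
        exact hε ⟨r, hr0, hrm⟩
      rw [atomicNorm_eq, hempty, Real.sInf_empty]
    have hR0 : atomicNorm A (0 : EuclideanSpace ℝ (Fin n)) = 0 := by
      apply le_antisymm
      · apply atomicNorm_le_of_mem (le_refl 0)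
        rw [Set.zero_smul_set hC]
        simp
      · exact atomicNorm_nonneg _
    have hmem0 : (0 : EuclideanSpace ℝ (Fin n)) ∈ sparse n k :=
      ⟨∅, by simp, fun i _ => rfl⟩
    have hdesc : signv n ε ∈ descentCone (atomicNorm A) (sparse n k) := by
      apply Set.mem_biUnion hmem0
      show atomicNorm A (0 + signv n ε) ≤ atomicNorm A 0
      rw [zero_add, hRs, hR0]
    have hsne : signv n ε ≠ 0 := by
      intro h
      have h1 : signv n ε ⟨0, hn0⟩ = 0 := by rw [h]; rfl
      by_cases hb : ε ⟨0, hn0⟩ <;> simp [signv, hb] at h1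
    have hsq1 : ∀ i, (signv n ε i) ^ 2 = 1 := by
      intro i; by_cases hb : ε i <;> simp [signv, hb]
    have hsig_s : sigmaSq n (2 * k) (signv n ε) = ((2 * k : ℕ) : ℝ) := by
      apply le_antisymm
      · apply sigmaSq_le
        intro T hT
        rw [Finset.sum_congr rfl (fun i _ => hsq1 i), Finset.sum_const, nsmul_eq_mul,
          mul_one]
        exact_mod_cast hT
      · obtain ⟨T₀, -, hT₀⟩ := Finset.exists_subset_card_eq
          (show 2 * k ≤ (Finset.univ : Finset (Fin n)).card by
            rw [Finset.card_univ, Fintype.card_fin]; exact hn)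
        have h := le_sigmaSq (signv n ε) T₀ (le_of_eq hT₀)
        rw [Finset.sum_congr rfl (fun i _ => hsq1 i), Finset.sum_const, nsmul_eq_mul,
          mul_one, hT₀] at h
        exact h
    have hnorm_s : ‖signv n ε‖ ^ 2 = (n : ℝ) := by
      rw [normsq_eq, Finset.sum_congr rfl (fun i _ => hsq1 i), Finset.sum_const,
        nsmul_eq_mul, mul_one, Finset.card_univ, Fintype.card_fin]
    have hσz_pos : 0 < sigmaSq n (2 * k) z := sigmaSq_pos (by omega) hzne
    have havg := avg_bound hn z
    have hkR : (1:ℝ) ≤ (k:ℝ) := by exact_mod_cast hk1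
    have h2k : (0:ℝ) < 2 * (k:ℝ) := by linarith
    have hzbound : (‖z‖ ^ 2 - sigmaSq n (2 * k) z) / sigmaSq n (2 * k) z ≤
        ((n:ℝ) - 2 * k) / (2 * k) := by
      rw [div_le_div_iff₀ hσz_pos h2k]
      linarith only [havg]
    have hval_s : (‖signv n ε‖ ^ 2 - sigmaSq n (2 * k) (signv n ε)) /
        sigmaSq n (2 * k) (signv n ε) = ((n:ℝ) - 2 * k) / (2 * k) := by
      rw [hsig_s, hnorm_s]
      norm_cast
    calc ENNReal.ofReal ((‖z‖ ^ 2 - sigmaSq n (2 * k) z) / sigmaSq n (2 * k) z)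
        ≤ ENNReal.ofReal (((n:ℝ) - 2 * k) / (2 * k)) := ENNReal.ofReal_le_ofReal hzbound
      _ = ENNReal.ofReal ((‖signv n ε‖ ^ 2 - sigmaSq n (2 * k) (signv n ε)) /
            sigmaSq n (2 * k) (signv n ε)) := by rw [hval_s]
      _ ≤ BSigma n k (atomicNorm A) := le_sSup ⟨signv n ε, hdesc, hsne, rfl⟩
end
end
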